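/- arXiv:1207.5072 — 5 statements merged into one kernel-verified Lean document; each statement's English description precedes it below -/
import Mathlib

section
/- If P : Σ'* → Σ* is a natural projection, SUP' is a generator over Σ' and SUP a nonblocking generator over Σ such that PL(SUP') = L(SUP), PL_m(SUP') = L_m(SUP), and P has the observer property with respect to SUP' and SUP (i.e., for all s ∈ L(SUP') and w ∈ Σ* with (Ps)w ∈ L_m(SUP), there exists v ∈ Σ'* with Pv = w and sv ∈ L_m(SUP')), then SUP' is nonblocking, i.e., the prefix closure of L_m(SUP') equals L(SUP'). -/
/-- Prefix closure of a language. -/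
def pclos {A : Type*} (L : Set (List A)) : Set (List A) := {s | ∃ u, s ++ u ∈ L}

/-- Natural projection: erase all letters not satisfying `p`. -/
def nproj {A : Type*} (p : A → Bool) (w : List A) : List A := w.filter p

/-- Strings over the alphabet `{a | p a}`. -/
def overAlph {A : Type*} (p : A → Bool) : Set (List A) := {w | ∀ a ∈ w, p a = true}

/-- If `P L(SUP') = L(SUP)`, `P L_m(SUP') = L_m(SUP)`, `SUP` is nonblocking, and `P` has the
observer property w.r.t. `SUP'` and `SUP`, then `SUP'` is nonblocking:
the prefix closure of `L_m(SUP')` equals `L(SUP')`. -/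
theorem stmt0 {A : Type*} (p : A → Bool)
    (L' Lm' L Lm : Set (List A))
    -- SUP' is a generator: closed language prefix-closed, marked ⊆ closed
    (hL'pc : pclos L' = L') (hLm'sub : Lm' ⊆ L')
    -- SUP is a nonblocking generator over Σ
    (hsupp : L ⊆ overAlph p) (hLmsub : Lm ⊆ L) (hnb : pclos Lm = L)
    -- P L(SUP') = L(SUP) and P L_m(SUP') = L_m(SUP)
    (hPL : nproj p '' L' = L) (hPLm : nproj p '' Lm' = Lm)
    -- observer property of P with respect to SUP' and SUP
    (hobs : ∀ s ∈ L', ∀ w ∈ overAlph p,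
      nproj p s ++ w ∈ Lm → ∃ v, nproj p v = w ∧ s ++ v ∈ Lm') :
    pclos Lm' = L' := by
  apply Set.Subset.antisymm
  · intro s ⟨u, hu⟩
    rw [← hL'pc]
    exact ⟨u, hLm'sub hu⟩
  · intro s hs
    have hPs : nproj p s ∈ L := hPL ▸ ⟨s, hs, rfl⟩
    rw [← hnb] at hPs
    obtain ⟨w, hw⟩ := hPs
    have hwA : w ∈ overAlph p := fun a ha =>
      hsupp (hLmsub hw) a (List.mem_append.mpr (Or.inr ha))
    obtain ⟨v, _, hv⟩ := hobs s hs w hwA hw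
    exact ⟨v, hv⟩
end

section
/- Let L_N ⊆ Σ'* be prefix-closed, CHNL the 2-state channel over {r,r'} ⊆ Σ', P_CHNL : Σ'* → {r,r'}* the natural projection, and L' = L_N ∩ P_CHNL⁻¹(closure((r r')*)). Then there exists s ∈ L' with s·r ∈ L_N and s·r ∉ L' if and only if L_N ∩ P_CHNL⁻¹((r r')* r (r r*)) is nonempty. -/
def kstar {A : Type*} (x : List A) : Set (List A) :=
  {w | ∃ n : ℕ, w = (List.replicate n x).flatten}

def keep2 {A : Type*} [DecidableEq A] (r r' : A) : A → Bool :=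
  fun a => a == r || a == r'

private def R {A : Type*} (r r' : A) (n : ℕ) : List A := (List.replicate n [r, r']).flatten

private lemma R_succ {A : Type*} (r r' : A) (n : ℕ) :
    R r r' (n+1) = [r, r'] ++ R r r' n := by
  simp [R, List.replicate_succ]

private lemma R_succ' {A : Type*} (r r' : A) (n : ℕ) :
    R r r' (n+1) = R r r' n ++ [r, r'] := by
  simp [R, List.replicate_succ']

private lemma R_length {A : Type*} (r r' : A) (n : ℕ) : (R r r' n).length = 2 * n := by
  induction n with
  | zero => simp [R]
  | succ k ih => rw [R_succ]; simp [ih]; ring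

private lemma pre_R {A : Type*} (r r' : A) :
    ∀ (n : ℕ) (v u : List A), v ++ u = R r r' n →
      (∃ k, v = R r r' k) ∨ (∃ k, v = R r r' k ++ [r]) := by
  intro n
  induction n with
  | zero =>
    intro v u hv
    simp [R] at hv
    exact Or.inl ⟨0, by simp [R, hv.1]⟩
  | succ m ih =>
    intro v u hv
    rw [R_succ] at hv
    match v with
    | [] => exact Or.inl ⟨0, by simp [R]⟩
    | [a] =>
      simp at hv
      exact Or.inr ⟨0, by simp [R, hv.1]⟩
    | a :: b :: v' =>
      simp at hv
      obtain ⟨ha, hb, hv'⟩ := hv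
      rcases ih v' u hv' with ⟨k, hk⟩ | ⟨k, hk⟩
      · exact Or.inl ⟨k+1, by rw [R_succ]; simp [ha, hb, hk]⟩
      · exact Or.inr ⟨k+1, by rw [R_succ]; simp [ha, hb, hk]⟩

private lemma mem_pclos_iff {A : Type*} (r r' : A) (v : List A) :
    v ∈ pclos (kstar [r, r']) ↔ (∃ k, v = R r r' k) ∨ (∃ k, v = R r r' k ++ [r]) := by
  constructor
  · rintro ⟨u, n, hn⟩
    exact pre_R r r' n v u hn
  · rintro (⟨k, hk⟩ | ⟨k, hk⟩)
    · exact ⟨[], k, by simp [hk, R]⟩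
    · refine ⟨[r'], k+1, ?_⟩
      rw [hk]
      have := R_succ' r r' k
      simp [R] at this ⊢
      simp [List.replicate_succ'] 

private lemma rr_not_mem {A : Type*} {r r' : A} (h : r ≠ r') (k : ℕ) :
    R r r' k ++ [r, r] ∉ pclos (kstar [r, r']) := by
  rw [mem_pclos_iff]
  rintro (⟨m, hm⟩ | ⟨m, hm⟩)
  · have hl : 2 * k + 2 = 2 * m := by
      have := congrArg List.length hm
      simpa [R_length] using this
    have hmk : m = k + 1 := by omega
    rw [hmk, R_succ'] at hm
    have := List.append_inj_right hm (by simp [R_length])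
    simp at this
    exact h this
  · have := congrArg List.length hm
    simp [R_length] at this
    omega

/-- Blocking test (Theorem 3): with `L' = L_N ∩ P_CHNL⁻¹(closure((r r')*))`, the event `r` is
blocked by its channel (∃ s ∈ L' with s·r ∈ L_N but s·r ∉ L') iff
`L_N ∩ P_CHNL⁻¹((r r')* r (r r*))` is nonempty. -/
theorem stmt8 {A : Type*} [DecidableEq A] (r r' : A) (h : r ≠ r')
    (LN : Set (List A)) (hpc : pclos LN = LN) :
    (∃ s ∈ LN ∩ (nproj (keep2 r r') ⁻¹' pclos (kstar [r, r'])),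
        s ++ [r] ∈ LN ∧
        s ++ [r] ∉ LN ∩ (nproj (keep2 r r') ⁻¹' pclos (kstar [r, r'])))
      ↔
    (LN ∩ (nproj (keep2 r r') ⁻¹'
        {w | ∃ u ∈ kstar [r, r'], ∃ n : ℕ,
          w = u ++ [r, r] ++ List.replicate n r})).Nonempty := by
  have hkr : keep2 r r' r = true := by simp [keep2]
  constructor
  · rintro ⟨s, ⟨hsLN, hsP⟩, hsr, hnot⟩
    have hfil : nproj (keep2 r r') (s ++ [r]) = nproj (keep2 r r') s ++ [r] := by
      simp [nproj, List.filter_append, hkr]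
    have hnotP : nproj (keep2 r r') (s ++ [r]) ∉ pclos (kstar [r, r']) := by
      intro hx
      exact hnot ⟨hsr, hx⟩
    rw [Set.mem_preimage, mem_pclos_iff] at hsP
    rcases hsP with ⟨k, hk⟩ | ⟨k, hk⟩
    · exfalso
      apply hnotP
      rw [hfil, hk, mem_pclos_iff]
      exact Or.inr ⟨k, rfl⟩
    · refine ⟨s ++ [r], hsr, ?_⟩
      refine ⟨R r r' k, ⟨k, rfl⟩, 0, ?_⟩
      rw [hfil, hk]
      simp
  · rintro ⟨w, hwLN, u, ⟨k, hku⟩, n, hw⟩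
    -- filter w = R k ++ [r] ++ ([r] ++ replicate n r)
    have hw' : nproj (keep2 r r') w = (R r r' k ++ [r]) ++ (r :: List.replicate n r) := by
      rw [hw, hku]; simp [R]
    rw [nproj, List.filter_eq_append_iff] at hw'
    obtain ⟨w₁, w₂, hsplit, hf1, hf2⟩ := hw'
    rw [List.filter_eq_cons_iff] at hf2
    obtain ⟨p, q, hw2, hp, -, -⟩ := hf2
    have hpnil : p.filter (keep2 r r') = [] := by
      rw [List.filter_eq_nil_iff]; exact hp
    set s := w₁ ++ p with hs
    have hwdecomp : w = (s ++ [r]) ++ q := by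
      rw [hs, hsplit, hw2]; simp
    have hw2' : s ++ ([r] ++ q) = w := by rw [hwdecomp]; simp
    have hw3' : (s ++ [r]) ++ q = w := by rw [hwdecomp]
    have hsLN : s ∈ LN := by
      rw [← hpc]; exact ⟨[r] ++ q, by rw [hw2']; exact hwLN⟩
    have hsrLN : s ++ [r] ∈ LN := by
      rw [← hpc]; exact ⟨q, by rw [hw3']; exact hwLN⟩
    have hfs : nproj (keep2 r r') s = R r r' k ++ [r] := by
      simp [nproj, hs, List.filter_append, hf1, hpnil]
    refine ⟨s, ⟨hsLN, ?_⟩, hsrLN, ?_⟩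
    · rw [Set.mem_preimage, hfs, mem_pclos_iff]
      exact Or.inr ⟨k, rfl⟩
    · rintro ⟨-, hP⟩
      rw [Set.mem_preimage] at hP
      have : nproj (keep2 r r') (s ++ [r]) = R r r' k ++ [r, r] := by
        simp only [nproj] at hfs ⊢
        rw [List.filter_append, hfs]
        simp [hkr]
      rw [this] at hP
      exact rr_not_mem h k hP
end

section
/- Observer property is preserved under composition of projections: let Σ ⊆ Σ'' ⊆ Σ', P'' : Σ'* → Σ''* and Q : Σ''* → Σ* natural projections, P' = Q ∘ P''. If P'' is an L_m-observer for L_m ⊆ Σ'* and Q is a (P'' L_m)-observer, then P' is an L_m-observer. -/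
/-- `P` is an `M`-observer. -/
def obsProp {A : Type*} (P : List A → List A) (M : Set (List A)) : Prop :=
  ∀ s ∈ pclos M, ∀ w, P s ++ w ∈ P '' M → ∃ v, P v = w ∧ s ++ v ∈ M

lemma filter_comp {A : Type*} (pS pT : A → Bool)
    (h : ∀ a, pS a = true → pT a = true) (l : List A) :
    (l.filter pT).filter pS = l.filter pS := by
  induction l with
  | nil => simp
  | cons a l ih =>
    by_cases hs : pS a
    · have ht := h a hs
      simp [List.filter_cons, hs, ht, ih]
    · by_cases ht : pT a <;> simp [List.filter_cons, hs, ht, ih]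

/-- The observer property is preserved under composition of natural projections:
if `P''` is an `L_m`-observer and `Q` is a `(P'' L_m)`-observer, then
`P' = Q ∘ P''` is an `L_m`-observer. -/
theorem stmt12 {A : Type*} (pS pT : A → Bool)
    (h : ∀ a, pS a = true → pT a = true)
    (M : Set (List A))
    (h1 : obsProp (nproj pT) M)
    (h2 : obsProp (nproj pS) (nproj pT '' M)) :
    obsProp (nproj pS) M := by
  intro s hs w hw
  obtain ⟨u, hu⟩ := hs
  have hsT : nproj pT s ∈ pclos (nproj pT '' M) := by
    refine ⟨nproj pT u, ⟨s ++ u, hu, ?_⟩⟩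
    simp [nproj, List.filter_append]
  have hw' : nproj pS (nproj pT s) ++ w ∈ nproj pS '' (nproj pT '' M) := by
    obtain ⟨m, hm, hms⟩ := hw
    refine ⟨nproj pT m, ⟨m, hm, rfl⟩, ?_⟩
    have : nproj pS (nproj pT s) = nproj pS s := filter_comp pS pT h s
    rw [this, ← hms]
    exact filter_comp pS pT h m
  obtain ⟨v, hv, hmem⟩ := h2 (nproj pT s) hsT w hw'
  have : nproj pT s ++ v ∈ nproj pT '' M := hmem
  obtain ⟨v', hv', hmem'⟩ := h1 s ⟨u, hu⟩ v this
  refine ⟨v', ?_, hmem'⟩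
  rw [← hv, ← hv']
  exact (filter_comp pS pT h v').symm
end

section
/- Suppose P : Σ'* → Σ* is the natural projection, and languages satisfy PL(SUP') = L(SUP), PL_m(SUP') = L_m(SUP), and P has the observer property with respect to SUP' and SUP. If additionally L(SUP) = closure(L_m(SUP)) and L(SUP') is prefix-closed with L_m(SUP') ⊆ L(SUP'), then for every s ∈ L(SUP') there exists v ∈ Σ'* with sv ∈ L_m(SUP'). -/
/-- If `P L(SUP') = L(SUP)`, `P L_m(SUP') = L_m(SUP)`, `P` has the observer property,
`SUP` is nonblocking (`L(SUP) = closure(L_m(SUP))`), `L(SUP')` is prefix-closed and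
`L_m(SUP') ⊆ L(SUP')`, then every string of `L(SUP')` can be extended to `L_m(SUP')`. -/
theorem stmt13 {A : Type*} (p : A → Bool) (L' Lm' L Lm : Set (List A))
    (hPL : nproj p '' L' = L) (hPLm : nproj p '' Lm' = Lm)
    (hobs : ∀ s ∈ L', ∀ w, nproj p s ++ w ∈ Lm →
      ∃ v, nproj p v = w ∧ s ++ v ∈ Lm')
    (hnb : pclos Lm = L)
    (hL'pc : pclos L' = L') (hLm'sub : Lm' ⊆ L') :
    ∀ s ∈ L', ∃ v, s ++ v ∈ Lm' := by
  intro s hs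
  have hPs : nproj p s ∈ L := hPL ▸ ⟨s, hs, rfl⟩
  rw [← hnb] at hPs
  obtain ⟨u, hu⟩ := hPs
  obtain ⟨v, _, hv⟩ := hobs s hs u hu
  exact ⟨v, hv⟩
end

section
/- For the specific 2-state and 3-state automata of Example 2 of the paper: SUP1 over {11,13,15,17,122} and SUP2 over {17,22} (sharing event 17), with event 22 replaced by signal 122 in SUP1 and channel over {22,122}, the resulting product SUP' contains the string 22·13 whose projection (erasing 122) is not in L(SUP1 ∥ SUP2 with 122 restored to 22); hence delay-robustness fails and SUP' is blocking: there is a reachable state of SUP' from which no marked state is reachable. -/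
def runF {Q A : Type*} (δ : Q → A → Option Q) (q : Q) (w : List A) : Option Q :=
  w.foldl (fun s a => s.bind fun q' => δ q' a) (some q)

/-- `SUP1` of Example 2: `0 --22--> 1`, `0 --13--> 2`, `1 --15--> 3` (marked), `2 --17--> 3`. -/
def d1 : ℕ → ℕ → Option ℕ := fun q a =>
  if q = 0 ∧ a = 22 then some 1
  else if q = 0 ∧ a = 13 then some 2
  else if q = 1 ∧ a = 15 then some 3
  else if q = 2 ∧ a = 17 then some 3
  else none

/-- `SUP1'`: `SUP1` with event 22 replaced by the signal event 122. -/
def d1' : ℕ → ℕ → Option ℕ := fun q a =>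
  if q = 0 ∧ a = 122 then some 1
  else if q = 0 ∧ a = 13 then some 2
  else if q = 1 ∧ a = 15 then some 3
  else if q = 2 ∧ a = 17 then some 3
  else none

/-- `SUP2` of Example 2: `0 --22--> 1`, `1 --17--> 2` (marked). -/
def d2 : ℕ → ℕ → Option ℕ := fun q a =>
  if q = 0 ∧ a = 22 then some 1
  else if q = 1 ∧ a = 17 then some 2
  else none

/-- The channel over `{22, 122}`: `0 --22--> 1`, `1 --122--> 0` (0 marked). -/
def dC : ℕ → ℕ → Option ℕ := fun q a =>
  if q = 0 ∧ a = 22 then some 1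
  else if q = 1 ∧ a = 122 then some 0
  else none

def a1 : ℕ → Bool := fun a => a == 22 || a == 13 || a == 15 || a == 17
def a1' : ℕ → Bool := fun a => a == 122 || a == 13 || a == 15 || a == 17
def a2 : ℕ → Bool := fun a => a == 22 || a == 17
def aC : ℕ → Bool := fun a => a == 22 || a == 122

/-- `L(SUP) = L(SUP1 ∥ SUP2)`. -/
def LS : Set (List ℕ) :=
  {s | (∀ a ∈ s, a1 a = true ∨ a2 a = true) ∧
       runF d1 0 (nproj a1 s) ≠ none ∧ runF d2 0 (nproj a2 s) ≠ none}

/-- `L(SUP') = L(SUP1' ∥ CHNL ∥ SUP2)`. -/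
def LS' : Set (List ℕ) :=
  {s | (∀ a ∈ s, a1' a = true ∨ a2 a = true ∨ aC a = true) ∧
       runF d1' 0 (nproj a1' s) ≠ none ∧ runF dC 0 (nproj aC s) ≠ none ∧
       runF d2 0 (nproj a2 s) ≠ none}

/-- `L_m(SUP')`: all three components reach their marked states (3, 0 and 2 resp.). -/
def LmS' : Set (List ℕ) :=
  {s | (∀ a ∈ s, a1' a = true ∨ a2 a = true ∨ aC a = true) ∧
       runF d1' 0 (nproj a1' s) = some 3 ∧ runF dC 0 (nproj aC s) = some 0 ∧
       runF d2 0 (nproj a2 s) = some 2}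

/- After `22·13` the signal `122` is pending in the channel, which can only return to its marked
state by emitting it; but `SUP1'` has taken `13` and sits in state `2`, from which `122` can never
occur again. So no extension of `22·13` is marked. -/

section Run

variable {Q A : Type*} (δ : Q → A → Option Q)

lemma foldl_bind_none (w : List A) :
    w.foldl (fun s a => s.bind fun q => δ q a) none = none := by
  induction w with
  | nil => rfl
  | cons a w ih => exact ih

lemma runF_cons (q : Q) (a : A) (w : List A) :
    runF δ q (a :: w) = (δ q a).bind (runF δ · w) := by
  cases h : δ q a <;> simp [runF, h, foldl_bind_none]

lemma exists_mem_enabled_of_runF_eq_some {q q' : Q} {w : List A} (hw : runF δ q w = some q')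
    (hne : q' ≠ q) : ∃ a ∈ w, δ q a ≠ none := by
  cases w with
  | nil => exact absurd (Option.some.inj hw).symm hne
  | cons a w =>
    refine ⟨a, List.mem_cons_self, fun ha => ?_⟩
    simp [runF_cons, ha] at hw

lemma runF_eq_none_of_mem (S : Set Q) (hS : ∀ q ∈ S, ∀ a q', δ q a = some q' → q' ∈ S)
    {b : A} (hb : ∀ q ∈ S, δ q b = none) {w : List A} (hw : b ∈ w) :
    ∀ q ∈ S, runF δ q w = none := by
  induction w with
  | nil => simp at hw
  | cons a w ih =>
    intro q hq
    rw [runF_cons]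
    cases h : δ q a with
    | none => rfl
    | some q' =>
      have hab : a ≠ b := fun hab => by simp [hab, hb q hq] at h
      exact ih (List.mem_of_ne_of_mem (Ne.symm hab) hw) q' (hS q hq a q' h)

end Run

lemma ne_pclos_of_forall_append_not_mem {A : Type*} {L Lm : Set (List A)} {s : List A}
    (hs : s ∈ L) (hblock : ∀ v, s ++ v ∉ Lm) : L ≠ pclos Lm := by
  rintro rfl
  obtain ⟨v, hv⟩ := hs
  exact hblock v hv

lemma mem_of_runF_dC_one_eq_zero {w : List ℕ} (hw : runF dC 1 w = some 0) : 122 ∈ w := by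
  obtain ⟨a, ha, hen⟩ := exists_mem_enabled_of_runF_eq_some dC hw one_ne_zero.symm
  have : a = 122 := by
    by_contra h
    simp [dC, h] at hen
  exact this ▸ ha

lemma runF_d1'_two_eq_none {w : List ℕ} (hw : 122 ∈ w) : runF d1' 2 w = none := by
  refine runF_eq_none_of_mem d1' {2, 3} ?_ ?_ hw 2 (by simp)
  · rintro q (rfl | rfl) a q' h
    · refine Or.inr ?_
      by_cases ha : a = 17 <;> simp_all [d1', eq_comm]
    · simp [d1'] at h
  · rintro q (rfl | rfl) <;> rfl

lemma append_not_mem_LmS' (v : List ℕ) : [22, 13] ++ v ∉ LmS' := by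
  rintro ⟨-, h1, hC, -⟩
  have hC' : runF dC 1 (nproj aC v) = some 0 := by
    simpa [nproj, aC, runF_cons, dC] using hC
  have h1' : runF d1' 2 (nproj a1' v) = some 3 := by
    simpa [nproj, a1', runF_cons, d1'] using h1
  have h122 : 122 ∈ nproj a1' v :=
    List.mem_filter.2 ⟨(List.mem_filter.1 (mem_of_runF_dC_one_eq_zero hC')).1, rfl⟩
  rw [runF_d1'_two_eq_none h122] at h1'
  exact Option.some_ne_none 3 h1'.symm

/-- Example 2: the string `22·13` is in `L(SUP')` but its projection (erasing 122) is not in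
`L(SUP)`; hence delay-robustness fails and `SUP'` is blocking: some reachable string of
`SUP'` has no extension to a marked string. -/
theorem stmt18 :
    [22, 13] ∈ LS' ∧
    nproj (fun a => !(a == 122)) [22, 13] ∉ LS ∧
    (∃ s ∈ LS', ∀ v, s ++ v ∉ LmS') ∧
    LS' ≠ pclos LmS' := by
  have hmem : [22, 13] ∈ LS' := by
    show _ ∧ _
    decide
  have hproj : nproj (fun a => !(a == 122)) [22, 13] ∉ LS := by
    show ¬ (_ ∧ _)
    decide
  exact ⟨hmem, hproj, ⟨_, hmem, append_not_mem_LmS'⟩,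
    ne_pclos_of_forall_append_not_mem hmem append_not_mem_LmS'⟩
end
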